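/- arXiv:1912.10111 — 2 statements merged into one kernel-verified Lean document; each statement's English description precedes it below -/
import Mathlib

section
/- Let μ be a Borel probability measure on [0,1], let n be a positive integer, and let (f,g),(F,G) ∈ C_n(I). If M_{f,g;μ} equals M_{F,G;μ} near the diagonal of I², then for all k ∈ {1,…,n} and all x ∈ I, the kth derivatives at 0 coincide: m_{x;f,g;μ}^{(k)}(0) = m_{x;F,G;μ}^{(k)}(0). -/
open MeasureTheory Set

/-- The generalized quasiarithmetic mean `M_{f,g;μ}` on the interval `I`. -/
noncomputable def Mmean (I : Set ℝ) (f g : ℝ → ℝ) (μ : Measure ℝ) (x y : ℝ) : ℝ :=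
  Function.invFunOn (fun t => f t / g t) I
    ((∫ t in Set.Icc (0:ℝ) 1, f (t * x + (1 - t) * y) ∂μ) /
      (∫ t in Set.Icc (0:ℝ) 1, g (t * x + (1 - t) * y) ∂μ))

/-- First moment `μ̂₁` of a measure on `[0,1]`. -/
noncomputable def mom1 (μ : Measure ℝ) : ℝ := ∫ t in Set.Icc (0:ℝ) 1, t ∂μ

/-- `n`-th centralized moment `μ_n` of a measure on `[0,1]`. -/
noncomputable def cmom (μ : Measure ℝ) (n : ℕ) : ℝ :=
  ∫ t in Set.Icc (0:ℝ) 1, (t - mom1 μ) ^ n ∂μ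

/-- The auxiliary function `m_{x;f,g;μ}`. -/
noncomputable def mfun (I : Set ℝ) (f g : ℝ → ℝ) (μ : Measure ℝ) (x : ℝ) : ℝ → ℝ :=
  fun u => Mmean I f g μ (x + (1 - mom1 μ) * u) (x - mom1 μ * u)

/-- The `(i,j)`-order Wronskian `W^{i,j}_{f,g} = f⁽ⁱ⁾g⁽ʲ⁾ − f⁽ʲ⁾g⁽ⁱ⁾`. -/
noncomputable def Wr (i j : ℕ) (f g : ℝ → ℝ) : ℝ → ℝ :=
  fun x => iteratedDeriv i f x * iteratedDeriv j g x - iteratedDeriv j f x * iteratedDeriv i g x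

/-- `Φ_{f,g} = W^{2,0}/W^{1,0}`. -/
noncomputable def Phi (f g : ℝ → ℝ) : ℝ → ℝ := fun x => Wr 2 0 f g x / Wr 1 0 f g x

/-- `Ψ_{f,g} = −W^{2,1}/W^{1,0}`. -/
noncomputable def Psi (f g : ℝ → ℝ) : ℝ → ℝ := fun x => -(Wr 2 1 f g x / Wr 1 0 f g x)

/-- The class `𝒞_n(I)` for `n ≥ 1`. -/
def ClassC (n : ℕ) (I : Set ℝ) (f g : ℝ → ℝ) : Prop :=
  ContDiffOn ℝ n f I ∧ ContDiffOn ℝ n g I ∧ (∀ x ∈ I, 0 < g x) ∧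
    ∀ x ∈ I, Wr 1 0 f g x ≠ 0

/-- The class `𝒞₀(I)`. -/
def ClassC0 (I : Set ℝ) (f g : ℝ → ℝ) : Prop :=
  ContinuousOn f I ∧ ContinuousOn g I ∧ (∀ x ∈ I, 0 < g x) ∧
    (StrictMonoOn (fun x => f x / g x) I ∨ StrictAntiOn (fun x => f x / g x) I)

/-- Equivalence of pairs: `(f,g) ∼ (F,G)`. -/
def EquivPair (I : Set ℝ) (f g F G : ℝ → ℝ) : Prop :=
  ∃ a b c d : ℝ, a * d ≠ b * c ∧
    ∀ x ∈ I, F x = a * f x + b * g x ∧ G x = c * f x + d * g x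

/-- Equality of two two-variable means near the diagonal of `I²`. -/
def EqualNearDiag (I : Set ℝ) (M N : ℝ → ℝ → ℝ) : Prop :=
  ∃ U : Set (ℝ × ℝ), IsOpen U ∧ U ⊆ I ×ˢ I ∧
    I ⊆ closure {y | y ∈ I ∧ (y, y) ∈ U} ∧
    ∀ p ∈ U, M p.1 p.2 = N p.1 p.2

/-- The quasiarithmetic mean `A_φ`. -/
noncomputable def QAmean (I : Set ℝ) (φ : ℝ → ℝ) (x y : ℝ) : ℝ :=
  Function.invFunOn φ I ((φ x + φ y) / 2)

/-- The sine-type function `S_t`. -/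
noncomputable def Sfun (t x : ℝ) : ℝ :=
  if t < 0 then Real.sin (Real.sqrt (-t) * x)
  else if t = 0 then x
  else Real.sinh (Real.sqrt t * x)

/-- The cosine-type function `C_t`. -/
noncomputable def Cfun (t x : ℝ) : ℝ :=
  if t < 0 then Real.cos (Real.sqrt (-t) * x)
  else if t = 0 then 1
  else Real.cosh (Real.sqrt t * x)

/-- The real (sign-preserving) cube root. -/
noncomputable def cbrt (x : ℝ) : ℝ :=
  if x < 0 then -((-x) ^ ((1:ℝ)/3)) else x ^ ((1:ℝ)/3)

/-!
Both means are `C^n` on `I × I`: the two integrals are `C^n` by differentiation under the integral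
sign, their quotient is a value of `f / g` by the mean value theorem for integrals, and
`(f / g)⁻¹` is `C^n` there by the inverse function theorem, since `(f / g)' = W^{1,0}_{f,g} / g²`
does not vanish. So the `k`-th derivatives of the two means (`k ≤ n`) are continuous on `I × I`;
they agree on the open set `U` where the means agree, hence on its closure, which contains the
diagonal. Finally `m_x^{(k)}(0)` is the `k`-th derivative of the mean at `(x, x)` in the direction
`(1 - μ̂₁, -μ̂₁)`.
-/

open Filter Topology

theorem exists_isCompact_mem_nhds_prod_subset {X Y : Type*} [TopologicalSpace X]
    [TopologicalSpace Y] [LocallyCompactSpace X] {K : Set Y} {V : Set (X × Y)} (hK : IsCompact K)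
    (hV : IsOpen V) {x : X} (hx : ∀ t ∈ K, (x, t) ∈ V) :
    ∃ C ∈ 𝓝 x, IsCompact C ∧ C ×ˢ K ⊆ V := by
  obtain ⟨u, v, hu, -, hxu, hKv, huv⟩ :=
    generalized_tube_lemma isCompact_singleton hK hV (by rintro ⟨_, t⟩ ⟨rfl, ht⟩; exact hx t ht)
  obtain ⟨C, hC, hCu, hCc⟩ := local_compact_nhds (hu.mem_nhds (hxu rfl))
  exact ⟨C, hC, hCc, (prod_mono hCu hKv).trans huv⟩

theorem ContDiffOn.contDiffOn_fderiv_fst {E G T : Type*} [NormedAddCommGroup E]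
    [NormedSpace ℝ E] [NormedAddCommGroup G] [NormedSpace ℝ G] [NormedAddCommGroup T]
    [NormedSpace ℝ T] {V : Set (E × T)} {n : ℕ} {F : E × T → G} (hV : IsOpen V)
    (hF : ContDiffOn ℝ (n + 1) F V) :
    ContDiffOn ℝ n (fun z : E × T => fderiv ℝ (fun x => F (x, z.2)) z.1) V := by
  intro z hz
  refine (ContDiffAt.fderiv (f := fun (z : E × T) x => F (x, z.2)) ?_ contDiffAt_fst
    le_rfl).contDiffWithinAt
  exact (hF.contDiffAt (hV.mem_nhds hz)).comp (z, z.1) (by fun_prop)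

section ParametricIntegral

variable {E G T : Type*} [NormedAddCommGroup E] [NormedAddCommGroup G] [NormedAddCommGroup T]
  [MeasurableSpace T] [OpensMeasurableSpace T] {μ : Measure T} {K : Set T} {V : Set (E × T)}
  {F : E × T → G}

theorem ContinuousOn.aestronglyMeasurable_slice (hK : IsCompact K) (hF : ContinuousOn F V)
    {x : E} (hx : ∀ t ∈ K, (x, t) ∈ V) :
    AEStronglyMeasurable (fun t => F (x, t)) (μ.restrict K) :=
  (hF.comp (by fun_prop) hx).aestronglyMeasurable_of_isCompact hK hK.measurableSet

variable [IsFiniteMeasureOnCompacts μ]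

theorem ContinuousOn.integrableOn_slice (hK : IsCompact K) (hF : ContinuousOn F V)
    {x : E} (hx : ∀ t ∈ K, (x, t) ∈ V) : IntegrableOn (fun t => F (x, t)) K μ :=
  (hF.comp (by fun_prop) hx).integrableOn_compact hK

variable [NormedSpace ℝ G] [LocallyCompactSpace E] {s : Set E}

theorem ContinuousOn.continuousOn_setIntegral (hK : IsCompact K) (hV : IsOpen V)
    (hF : ContinuousOn F V) (hsK : s ×ˢ K ⊆ V) :
    ContinuousOn (fun x => ∫ t in K, F (x, t) ∂μ) s := by
  intro x₀ hx₀
  have hx₀K : ∀ t ∈ K, (x₀, t) ∈ V := fun t ht => hsK ⟨hx₀, ht⟩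
  obtain ⟨C, hC, hCc, hCV⟩ := exists_isCompact_mem_nhds_prod_subset hK hV hx₀K
  obtain ⟨B, hB⟩ := (hCc.prod hK).exists_bound_of_continuousOn (hF.mono hCV)
  refine (continuousAt_of_dominated (bound := fun _ => B) ?_ ?_
    (integrableOn_const hK.measure_ne_top) ?_).continuousWithinAt
  · filter_upwards [hC] with x hx
    exact hF.aestronglyMeasurable_slice hK fun t ht => hCV ⟨hx, ht⟩
  · filter_upwards [hC] with x hx
    exact (ae_restrict_iff' hK.measurableSet).2 (ae_of_all _ fun t ht => hB _ ⟨hx, ht⟩)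
  · refine (ae_restrict_iff' hK.measurableSet).2 (ae_of_all _ fun t ht => ?_)
    exact ContinuousAt.comp (g := F) (f := fun x => (x, t))
      (hF.continuousAt (hV.mem_nhds (hx₀K t ht))) (by fun_prop)

variable [NormedSpace ℝ E] [NormedSpace ℝ T]

theorem ContDiffOn.hasFDerivAt_setIntegral (hK : IsCompact K) (hV : IsOpen V)
    (hF : ContDiffOn ℝ 1 F V) {x₀ : E} (hx₀ : ∀ t ∈ K, (x₀, t) ∈ V) :
    HasFDerivAt (fun x => ∫ t in K, F (x, t) ∂μ)
      (∫ t in K, fderiv ℝ (fun x => F (x, t)) x₀ ∂μ) x₀ := by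
  obtain ⟨C, hC, hCc, hCV⟩ := exists_isCompact_mem_nhds_prod_subset hK hV hx₀
  have hF' := (hF.contDiffOn_fderiv_fst (n := 0) hV).continuousOn
  obtain ⟨B, hB⟩ := (hCc.prod hK).exists_bound_of_continuousOn (hF'.mono hCV)
  refine hasFDerivAt_integral_of_dominated_of_fderiv_le (F := fun x t => F (x, t))
    (F' := fun x t => fderiv ℝ (fun y => F (y, t)) x)
    (μ := μ.restrict K) (bound := fun _ => B) hC ?_ (hF.continuousOn.integrableOn_slice hK hx₀)
    (hF'.aestronglyMeasurable_slice hK hx₀) ?_ (integrableOn_const hK.measure_ne_top) ?_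
  · filter_upwards [hC] with x hx
    exact hF.continuousOn.aestronglyMeasurable_slice hK fun t ht => hCV ⟨hx, ht⟩
  · refine (ae_restrict_iff' hK.measurableSet).2 (ae_of_all _ fun t ht x hx => ?_)
    exact hB (x, t) ⟨hx, ht⟩
  · refine (ae_restrict_iff' hK.measurableSet).2 (ae_of_all _ fun t ht x hx => ?_)
    have hFd : DifferentiableAt ℝ F (x, t) :=
      (hF.differentiableOn one_ne_zero).differentiableAt (hV.mem_nhds (hCV ⟨hx, ht⟩))
    exact (DifferentiableAt.comp (g := F) (f := fun y => (y, t)) x hFd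
      (by fun_prop)).hasFDerivAt

end ParametricIntegral

universe u

-- `E` and `G` share a universe because the induction passes to the `E →L[ℝ] G`-valued
-- partial derivative.
theorem ContDiffOn.contDiffOn_setIntegral {E G : Type u} {T : Type*} [NormedAddCommGroup E]
    [NormedSpace ℝ E] [LocallyCompactSpace E] [NormedAddCommGroup G] [NormedSpace ℝ G]
    [NormedAddCommGroup T] [NormedSpace ℝ T] [MeasurableSpace T] [OpensMeasurableSpace T]
    {μ : Measure T} [IsFiniteMeasureOnCompacts μ] {K : Set T} {V : Set (E × T)} {s : Set E}
    (hK : IsCompact K) (hV : IsOpen V) (hs : IsOpen s) (hsK : s ×ˢ K ⊆ V) {n : ℕ}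
    {F : E × T → G} (hF : ContDiffOn ℝ n F V) :
    ContDiffOn ℝ n (fun x => ∫ t in K, F (x, t) ∂μ) s := by
  induction n generalizing G with
  | zero => exact contDiffOn_zero.2 (hF.continuousOn.continuousOn_setIntegral hK hV hsK)
  | succ n ih =>
    have hx : ∀ x ∈ s, ∀ t ∈ K, (x, t) ∈ V := fun x hx t ht => hsK ⟨hx, ht⟩
    have hF1 : ContDiffOn ℝ 1 F V := hF.of_le (by exact_mod_cast Nat.le_add_left 1 n)
    have hderiv x (hx' : x ∈ s) := hF1.hasFDerivAt_setIntegral (μ := μ) hK hV (hx x hx')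
    rw [Nat.cast_succ, contDiffOn_succ_iff_fderiv_of_isOpen hs]
    refine ⟨fun x hx' => (hderiv x hx').differentiableAt.differentiableWithinAt,
      fun h => absurd h (by simp), ?_⟩
    exact (ih (hF.contDiffOn_fderiv_fst hV)).congr fun x hx' => (hderiv x hx').fderiv

theorem setIntegral_pos_of_forall_pos {X : Type*} [MeasurableSpace X] {μ : Measure X} {s : Set X}
    (hs : MeasurableSet s) (hμs : μ s ≠ 0) {f : X → ℝ} (hfi : IntegrableOn f s μ)
    (hf : ∀ x ∈ s, 0 < f x) : 0 < ∫ x in s, f x ∂μ := by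
  rw [setIntegral_pos_iff_support_of_nonneg_ae
    ((ae_restrict_iff' hs).2 (ae_of_all _ fun x hx => (hf x hx).le)) hfi]
  have hsupp : Function.support f ∩ s = s := inter_eq_right.2 fun x hx => (hf x hx).ne'
  rw [hsupp]
  exact pos_iff_ne_zero.2 hμs

theorem IsCompact.exists_eq_setIntegral_mul_div {T : Type*} [TopologicalSpace T] [T2Space T]
    [MeasurableSpace T] [OpensMeasurableSpace T] {μ : Measure T} [IsFiniteMeasureOnCompacts μ]
    {K : Set T} (hK : IsCompact K) (hKc : IsPreconnected K) (hμK : μ K ≠ 0) {ψ w : T → ℝ}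
    (hψ : ContinuousOn ψ K) (hw : ContinuousOn w K) (hw₀ : ∀ t ∈ K, 0 < w t) :
    ∃ t ∈ K, ψ t = (∫ t in K, ψ t * w t ∂μ) / ∫ t in K, w t ∂μ := by
  have hKne : K.Nonempty := nonempty_of_measure_ne_zero hμK
  obtain ⟨a, ha, hmin⟩ := hK.exists_isMinOn hKne hψ
  obtain ⟨b, hb, hmax⟩ := hK.exists_isMaxOn hKne hψ
  have hwi : IntegrableOn w K μ := hw.integrableOn_compact hK
  have hψwi : IntegrableOn (fun t => ψ t * w t) K μ := (hψ.mul hw).integrableOn_compact hK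
  have hw_pos : 0 < ∫ t in K, w t ∂μ := setIntegral_pos_of_forall_pos hK.measurableSet hμK hwi hw₀
  have hlow : ψ a * ∫ t in K, w t ∂μ ≤ ∫ t in K, ψ t * w t ∂μ := by
    rw [← integral_const_mul]
    exact setIntegral_mono_on (hwi.const_mul _) hψwi hK.measurableSet fun t ht =>
      mul_le_mul_of_nonneg_right (hmin ht) (hw₀ t ht).le
  have hhigh : ∫ t in K, ψ t * w t ∂μ ≤ ψ b * ∫ t in K, w t ∂μ := by
    rw [← integral_const_mul]
    exact setIntegral_mono_on hψwi (hwi.const_mul _) hK.measurableSet fun t ht =>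
      mul_le_mul_of_nonneg_right (hmax ht) (hw₀ t ht).le
  obtain ⟨t, ht, hψt⟩ := hKc.intermediate_value ha hb hψ
    ⟨(le_div_iff₀ hw_pos).2 hlow, (div_le_iff₀ hw_pos).2 hhigh⟩
  exact ⟨t, ht, hψt⟩

theorem Set.OrdConnected.injOn_of_hasDerivAt_ne_zero {s : Set ℝ} (hs : s.OrdConnected)
    {f f' : ℝ → ℝ} (hf : ∀ x ∈ s, HasDerivAt f (f' x) x) (hf' : ∀ x ∈ s, f' x ≠ 0) :
    InjOn f s := by
  have hlt : ∀ a ∈ s, ∀ b ∈ s, a < b → f a ≠ f b := by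
    intro a ha b hb hab hfab
    have hab' : Icc a b ⊆ s := hs.out ha hb
    obtain ⟨c, hc, hc'⟩ := exists_hasDerivAt_eq_slope f f' hab
      (fun x hx => (hf x (hab' hx)).continuousAt.continuousWithinAt)
      (fun x hx => hf x (hab' (Ioo_subset_Icc_self hx)))
    rw [hfab, sub_self, zero_div] at hc'
    exact hf' c (hab' (Ioo_subset_Icc_self hc)) hc'
  intro a ha b hb hfab
  by_contra hne
  rcases lt_or_gt_of_ne hne with h | h
  · exact hlt a ha b hb h hfab
  · exact hlt b hb a ha h hfab.symm

theorem ContDiffAt.contDiffAt_invFunOn {𝕂 E F : Type*} [RCLike 𝕂] [NormedAddCommGroup E]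
    [NormedSpace 𝕂 E] [CompleteSpace E] [NormedAddCommGroup F] [NormedSpace 𝕂 F] [CompleteSpace F]
    {f : E → F} {f' : E ≃L[𝕂] F} {s : Set E} {a : E} {n : WithTop ℕ∞}
    (hf : ContDiffAt 𝕂 n f a) (hf' : HasFDerivAt f (f' : E →L[𝕂] F) a) (hn : n ≠ 0)
    (hs : s ∈ 𝓝 a) (hinj : InjOn f s) : ContDiffAt 𝕂 n (Function.invFunOn f s) (f a) := by
  let g := hf.localInverse hf' hn
  have hg : ContDiffAt 𝕂 n g (f a) := hf.to_localInverse hf' hn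
  have hga : g (f a) = a := hf.localInverse_apply_image hf' hn
  have hgs : ∀ᶠ y in 𝓝 (f a), g y ∈ s := hg.continuousAt.preimage_mem_nhds (by rwa [hga])
  have hfg : ∀ᶠ y in 𝓝 (f a), f (g y) = y :=
    (hf.hasStrictFDerivAt' hf' hn).eventually_right_inverse
  refine hg.congr_of_eventuallyEq ?_
  filter_upwards [hgs, hfg] with y hys hy
  conv_lhs => rw [← hy]
  exact hinj.leftInvOn_invFunOn hys

theorem iteratedDeriv_comp_add_smul {𝕜 E F : Type*} [NontriviallyNormedField 𝕜]
    [NormedAddCommGroup E] [NormedSpace 𝕜 E] [NormedAddCommGroup F] [NormedSpace 𝕜 F]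
    {D : E → F} {W : Set E} {n : ℕ} (hW : IsOpen W) (hD : ContDiffOn 𝕜 n D W) {x y : E}
    {k : ℕ} (hk : k ≤ n) {t : 𝕜} (ht : x + t • y ∈ W) :
    iteratedDeriv k (fun s => D (x + s • y)) t = iteratedFDeriv 𝕜 k D (x + t • y) (fun _ => y) := by
  induction k generalizing t with
  | zero => simp
  | succ k ih =>
    have hline : ∀ᶠ s in 𝓝 t, x + s • y ∈ W :=
      (by fun_prop : Continuous fun s : 𝕜 => x + s • y).continuousAt.preimage_mem_nhds
        (hW.mem_nhds ht)
    rw [iteratedDeriv_succ, Filter.EventuallyEq.deriv_eq (hline.mono fun s hs => ih (by omega) hs)]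
    exact ((hD.contDiffAt (hW.mem_nhds ht)).of_le (by exact_mod_cast hk)).deriv_fderiv_add_smul

theorem iteratedFDeriv_eq_of_eqOn_of_mem_closure {𝕜 E F : Type*} [NontriviallyNormedField 𝕜]
    [NormedAddCommGroup E] [NormedSpace 𝕜 E] [NormedAddCommGroup F] [NormedSpace 𝕜 F]
    {f₁ f₂ : E → F} {U W : Set E} {n k : ℕ} (hW : IsOpen W) (hU : IsOpen U) (hUW : U ⊆ W)
    (h₁ : ContDiffOn 𝕜 n f₁ W) (h₂ : ContDiffOn 𝕜 n f₂ W) (heq : EqOn f₁ f₂ U) (hk : k ≤ n)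
    {z : E} (hzW : z ∈ W) (hzU : z ∈ closure U) :
    iteratedFDeriv 𝕜 k f₁ z = iteratedFDeriv 𝕜 k f₂ z := by
  have hcont {f : E → F} (hf : ContDiffOn 𝕜 n f W) : ContinuousOn (iteratedFDeriv 𝕜 k f) W :=
    (hf.continuousOn_iteratedFDerivWithin (by exact_mod_cast hk) hW.uniqueDiffOn).congr
      fun w hw => (iteratedFDerivWithin_of_isOpen k hW hw).symm
  refine EqOn.of_subset_closure (s := U) (t := W ∩ closure U) (fun w hw => ?_)
    ((hcont h₁).mono inter_subset_left) ((hcont h₂).mono inter_subset_left)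
    (subset_inter hUW subset_closure) inter_subset_right ⟨hzW, hzU⟩
  exact ((heq.eventuallyEq_of_mem (hU.mem_nhds hw)).iteratedFDeriv 𝕜 k).eq_of_nhds

section QuasiarithmeticMean

variable {I : Set ℝ} {n : ℕ} {f g : ℝ → ℝ}

theorem ClassC.hasDerivAt_div (hI : IsOpen I) (hn : n ≠ 0) (hfg : ClassC n I f g) {x : ℝ}
    (hx : x ∈ I) : HasDerivAt (fun x => f x / g x) (Wr 1 0 f g x / g x ^ 2) x := by
  obtain ⟨hf, hg, hg₀, -⟩ := hfg
  have hn' : (n : WithTop ℕ∞) ≠ 0 := by exact_mod_cast hn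
  have hfd := ((hf.differentiableOn hn').differentiableAt (hI.mem_nhds hx)).hasDerivAt
  have hgd := ((hg.differentiableOn hn').differentiableAt (hI.mem_nhds hx)).hasDerivAt
  simpa [Wr] using hfd.fun_div hgd (hg₀ x hx).ne'

theorem ClassC.injOn_div (hI : IsOpen I) (hIc : I.OrdConnected) (hn : n ≠ 0)
    (hfg : ClassC n I f g) : InjOn (fun x => f x / g x) I :=
  hIc.injOn_of_hasDerivAt_ne_zero (fun _ hx => hfg.hasDerivAt_div hI hn hx) fun x hx =>
    div_ne_zero (hfg.2.2.2 x hx) (pow_pos (hfg.2.2.1 x hx) 2).ne'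

theorem ClassC.contDiffAt_invFunOn_div (hI : IsOpen I) (hIc : I.OrdConnected) (hn : n ≠ 0)
    (hfg : ClassC n I f g) {c : ℝ} (hc : c ∈ I) :
    ContDiffAt ℝ n (Function.invFunOn (fun x => f x / g x) I) (f c / g c) := by
  have hφ : ContDiffAt ℝ n (fun x => f x / g x) c :=
    (hfg.1.contDiffAt (hI.mem_nhds hc)).div (hfg.2.1.contDiffAt (hI.mem_nhds hc))
      (hfg.2.2.1 c hc).ne'
  exact hφ.contDiffAt_invFunOn ((hfg.hasDerivAt_div hI hn hc).hasFDerivAt_equiv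
    (div_ne_zero (hfg.2.2.2 c hc) (pow_pos (hfg.2.2.1 c hc) 2).ne')) (by exact_mod_cast hn)
    (hI.mem_nhds hc) (hfg.injOn_div hI hIc hn)

theorem Set.OrdConnected.mul_add_one_sub_mul_mem (hIc : I.OrdConnected) {x y t : ℝ} (hx : x ∈ I)
    (hy : y ∈ I) (ht : t ∈ Icc (0 : ℝ) 1) : t * x + (1 - t) * y ∈ I := by
  simpa using hIc.convex hx hy ht.1 (sub_nonneg.2 ht.2) (add_sub_cancel t 1)

variable {μ : Measure ℝ} [IsFiniteMeasure μ]

theorem contDiffOn_integral_comp_segment (hI : IsOpen I) (hIc : I.OrdConnected)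
    (hf : ContDiffOn ℝ n f I) :
    ContDiffOn ℝ n (fun q : ℝ × ℝ => ∫ t in Icc (0 : ℝ) 1, f (t * q.1 + (1 - t) * q.2) ∂μ)
      (I ×ˢ I) := by
  refine ContDiffOn.contDiffOn_setIntegral
    (F := fun z : (ℝ × ℝ) × ℝ => f (z.2 * z.1.1 + (1 - z.2) * z.1.2)) isCompact_Icc
    (hI.preimage (by fun_prop)) (hI.prod hI) ?_ (hf.comp (by fun_prop) fun z hz => hz)
  rintro ⟨⟨x, y⟩, t⟩ ⟨⟨hx, hy⟩, ht⟩
  exact hIc.mul_add_one_sub_mul_mem hx hy ht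

theorem exists_div_eq_div_integral_comp_segment (hIc : I.OrdConnected)
    (hμ : μ (Icc 0 1) ≠ 0) (hf : ContinuousOn f I) (hg : ContinuousOn g I)
    (hg₀ : ∀ x ∈ I, 0 < g x) {x y : ℝ} (hx : x ∈ I) (hy : y ∈ I) :
    ∃ c ∈ I, f c / g c = (∫ t in Icc (0 : ℝ) 1, f (t * x + (1 - t) * y) ∂μ) /
      ∫ t in Icc (0 : ℝ) 1, g (t * x + (1 - t) * y) ∂μ := by
  have hseg : MapsTo (fun t => t * x + (1 - t) * y) (Icc 0 1) I := fun _ =>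
    hIc.mul_add_one_sub_mul_mem hx hy
  obtain ⟨t, ht, hψt⟩ := isCompact_Icc.exists_eq_setIntegral_mul_div isPreconnected_Icc hμ
    ((hf.div hg fun z hz => (hg₀ z hz).ne').comp (by fun_prop) hseg)
    (hg.comp (by fun_prop) hseg) fun t ht => hg₀ _ (hseg ht)
  refine ⟨_, hseg ht, hψt.trans ?_⟩
  congr 1
  exact setIntegral_congr_fun measurableSet_Icc fun s hs =>
    div_mul_cancel₀ _ (hg₀ _ (hseg hs)).ne'

theorem ClassC.contDiffOn_Mmean (hI : IsOpen I) (hIc : I.OrdConnected) (hμ : μ (Icc 0 1) ≠ 0)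
    (hn : n ≠ 0) (hfg : ClassC n I f g) :
    ContDiffOn ℝ n (fun q : ℝ × ℝ => Mmean I f g μ q.1 q.2) (I ×ˢ I) := by
  obtain ⟨hf, hg, hg₀, -⟩ := id hfg
  intro q hq
  have hseg : MapsTo (fun t => t * q.1 + (1 - t) * q.2) (Icc 0 1) I := fun _ =>
    hIc.mul_add_one_sub_mul_mem hq.1 hq.2
  have hpos : 0 < ∫ t in Icc (0 : ℝ) 1, g (t * q.1 + (1 - t) * q.2) ∂μ :=
    setIntegral_pos_of_forall_pos measurableSet_Icc hμ
      ((hg.continuousOn.comp (by fun_prop) hseg).integrableOn_compact isCompact_Icc)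
      fun t ht => hg₀ _ (hseg ht)
  have hq' : I ×ˢ I ∈ 𝓝 q := (hI.prod hI).mem_nhds hq
  have hratio := ((contDiffOn_integral_comp_segment (μ := μ) hI hIc hf).contDiffAt hq').div
    ((contDiffOn_integral_comp_segment (μ := μ) hI hIc hg).contDiffAt hq') hpos.ne'
  obtain ⟨c, hc, hcq⟩ := exists_div_eq_div_integral_comp_segment hIc hμ hf.continuousOn
    hg.continuousOn hg₀ hq.1 hq.2
  have hinv := hfg.contDiffAt_invFunOn_div hI hIc hn hc
  rw [hcq] at hinv
  exact (hinv.comp q hratio).contDiffWithinAt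

end QuasiarithmeticMean

theorem iteratedDeriv_mfun {I : Set ℝ} {f g : ℝ → ℝ} {μ : Measure ℝ} {n k : ℕ} (hI : IsOpen I)
    (hM : ContDiffOn ℝ n (fun q : ℝ × ℝ => Mmean I f g μ q.1 q.2) (I ×ˢ I)) (hk : k ≤ n)
    {x : ℝ} (hx : x ∈ I) :
    iteratedDeriv k (mfun I f g μ x) 0 = iteratedFDeriv ℝ k
      (fun q : ℝ × ℝ => Mmean I f g μ q.1 q.2) (x, x) (fun _ => (1 - mom1 μ, -mom1 μ)) := by
  have hline : mfun I f g μ x = fun u =>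
      (fun q : ℝ × ℝ => Mmean I f g μ q.1 q.2) ((x, x) + u • (1 - mom1 μ, -mom1 μ)) := by
    funext u
    simp only [mfun, Prod.smul_mk, Prod.mk_add_mk, smul_eq_mul]
    congr 1 <;> ring
  rw [hline, iteratedDeriv_comp_add_smul (hI.prod hI) hM hk (by simpa using And.intro hx hx)]
  simp

theorem statement9_general (I : Set ℝ) (hIopen : IsOpen I)
    (hIconn : I.OrdConnected)
    (μ : Measure ℝ) [IsProbabilityMeasure μ] (hsupp : μ (Set.Icc (0:ℝ) 1)ᶜ = 0)
    (n : ℕ)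
    (f g F G : ℝ → ℝ) (hfg : ClassC n I f g) (hFG : ClassC n I F G)
    (heq : EqualNearDiag I (Mmean I f g μ) (Mmean I F G μ)) :
    ∀ k, 1 ≤ k → k ≤ n → ∀ x ∈ I,
      iteratedDeriv k (mfun I f g μ x) 0 = iteratedDeriv k (mfun I F G μ x) 0 := by
  obtain ⟨U, hU, hUI, hdense, hUeq⟩ := heq
  intro k hk hkn x hx
  have hn : n ≠ 0 := by omega
  have hμ : μ (Icc 0 1) ≠ 0 := by
    rw [(prob_compl_eq_zero_iff measurableSet_Icc).1 hsupp]
    exact one_ne_zero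
  have hM₁ := hfg.contDiffOn_Mmean hIopen hIconn hμ hn
  have hM₂ := hFG.contDiffOn_Mmean hIopen hIconn hμ hn
  have hxx : (x, x) ∈ closure U :=
    map_mem_closure (f := fun y => (y, y)) (by fun_prop) (hdense hx) fun y hy => hy.2
  rw [iteratedDeriv_mfun hIopen hM₁ hkn hx, iteratedDeriv_mfun hIopen hM₂ hkn hx,
    iteratedFDeriv_eq_of_eqOn_of_mem_closure (hIopen.prod hIopen) hU hUI hM₁ hM₂
      hUeq hkn ⟨hx, hx⟩ hxx]

/-- Equality near the diagonal implies equality of derivatives of `m_x` at `0`. -/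
theorem statement9 (I : Set ℝ) (hIopen : IsOpen I) (hIne : I.Nonempty)
    (hIconn : I.OrdConnected)
    (μ : Measure ℝ) [IsProbabilityMeasure μ] (hsupp : μ (Set.Icc (0:ℝ) 1)ᶜ = 0)
    (n : ℕ) (hn : 1 ≤ n)
    (f g F G : ℝ → ℝ) (hfg : ClassC n I f g) (hFG : ClassC n I F G)
    (heq : EqualNearDiag I (Mmean I f g μ) (Mmean I F G μ)) :
    ∀ k, 1 ≤ k → k ≤ n → ∀ x ∈ I,
      iteratedDeriv k (mfun I f g μ x) 0 = iteratedDeriv k (mfun I F G μ x) 0 :=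
  statement9_general I hIopen hIconn μ hsupp n f g F G hfg hFG heq
end

section
/- Let n be a positive integer, let (f,g) ∈ C_n(I), and let μ be a Borel probability measure on [0,1]. Then for every fixed x ∈ I, the function m_x := m_{x;f,g;μ} is n-times continuously differentiable in a neighborhood of 0, m_x(0) = x, and the following identity holds: Σ_{i=0}^{n} binom(n,i) μ_i · [ f^{(i)}(x)·(g∘m_x)^{(n−i)}(0) − g^{(i)}(x)·(f∘m_x)^{(n−i)}(0) ] = 0. -/
/-!
Along the line `u ↦ (x + (1 - μ̂₁) u, x - μ̂₁ u)` the two integrals defining the mean become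
`F(u) = ∫ f(x + (t - μ̂₁) u) dμ(t)` and `G(u) = ∫ g(x + (t - μ̂₁) u) dμ(t)`, so that
`m_x = (f/g)⁻¹ ∘ (F/G)`. The derivative of `f/g` is `W^{1,0}_{f,g}/g² ≠ 0`, so by Rolle `f/g` is
injective on the interval `I`, and by the inverse function theorem its inverse is `C^n` near
`(f/g)(x) = (F/G)(0)`; hence `m_x` is `C^n` near `0` and `F · (g ∘ m_x) - G · (f ∘ m_x)` vanishes
near `0`. Differentiating under the integral sign gives `F⁽ᵏ⁾(0) = μ_k f⁽ᵏ⁾(x)` and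
`G⁽ᵏ⁾(0) = μ_k g⁽ᵏ⁾(x)`, and the Leibniz rule applied to the `n`-th derivative of the vanishing
function is the identity.
-/

open MeasureTheory Set

open Filter Topology Metric Function

theorem HasStrictDerivAt.image_mem_nhds {𝕜 : Type*} [NontriviallyNormedField 𝕜] [CompleteSpace 𝕜]
    {h : 𝕜 → 𝕜} {h' x : 𝕜} {s : Set 𝕜} (hh : HasStrictDerivAt h h' x) (hh' : h' ≠ 0)
    (hs : s ∈ 𝓝 x) : h '' s ∈ 𝓝 (h x) :=
  hh.map_nhds_eq hh' ▸ image_mem_map hs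

theorem ContDiffAt.contDiffAt_invFunOn_s10 {𝕜 : Type*} [RCLike 𝕜] {h : 𝕜 → 𝕜} {s : Set 𝕜} {x : 𝕜}
    {n : WithTop ℕ∞} (hh : ContDiffAt 𝕜 n h x) (hn : n ≠ 0) (hx : deriv h x ≠ 0)
    (hinj : InjOn h s) (hs : s ∈ 𝓝 x) :
    ContDiffAt 𝕜 n (invFunOn h s) (h x) := by
  have hd := ((hh.differentiableAt hn).hasDerivAt).hasFDerivAt_equiv hx
  have hL := hh.to_localInverse hd hn
  have hLs : hh.localInverse hd hn ⁻¹' s ∈ 𝓝 (h x) :=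
    hL.continuousAt.preimage_mem_nhds (by rwa [hh.localInverse_apply_image])
  refine hL.congr_of_eventuallyEq ?_
  filter_upwards [(hh.hasStrictFDerivAt' hd hn).eventually_right_inverse, hLs] with y hy hys
  exact (congrArg (invFunOn h s) hy).symm.trans (hinj.leftInvOn_invFunOn hys)

theorem Set.OrdConnected.injOn_of_deriv_ne_zero {h : ℝ → ℝ} {s : Set ℝ} (hs : s.OrdConnected)
    (hh : ∀ y ∈ s, deriv h y ≠ 0) : InjOn h s := by
  have hne : ∀ a ∈ s, ∀ b ∈ s, a < b → h a ≠ h b := fun a ha b hb hab heq => by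
    have hcont : ContinuousOn h (Icc a b) := fun y hy =>
      (differentiableAt_of_deriv_ne_zero (hh y (hs.out ha hb hy))).continuousAt.continuousWithinAt
    obtain ⟨ξ, hξ, hξ0⟩ := exists_deriv_eq_zero hab hcont heq
    exact hh ξ (hs.out ha hb (Ioo_subset_Icc_self hξ)) hξ0
  intro a ha b hb hab
  by_contra hab'
  rcases lt_or_gt_of_ne hab' with hlt | hlt
  · exact hne a ha b hb hlt hab
  · exact hne b hb a ha hlt hab.symm

theorem sum_choose_mul_iteratedDeriv_sub_eq_zero {F G φ ψ : ℝ → ℝ} {a : ℝ} {n : ℕ}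
    (hF : ContDiffAt ℝ n F a) (hG : ContDiffAt ℝ n G a) (hφ : ContDiffAt ℝ n φ a)
    (hψ : ContDiffAt ℝ n ψ a) (h : (fun u => F u * φ u - G u * ψ u) =ᶠ[𝓝 a] 0) :
    ∑ i ∈ Finset.range (n + 1), (n.choose i : ℝ) *
      (iteratedDeriv i F a * iteratedDeriv (n - i) φ a -
        iteratedDeriv i G a * iteratedDeriv (n - i) ψ a) = 0 := by
  have h' := h.iteratedDeriv_eq n
  rw [iteratedDeriv_fun_sub (hF.mul hφ) (hG.mul hψ), iteratedDeriv_fun_mul hF hφ,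
    iteratedDeriv_fun_mul hG hψ] at h'
  simpa [mul_sub, Finset.sum_sub_distrib, mul_assoc] using h'

namespace ClassC

variable {n : ℕ} {I : Set ℝ} {f g : ℝ → ℝ} {x : ℝ}

theorem contDiffOn_div (hfg : ClassC n I f g) : ContDiffOn ℝ n (fun y => f y / g y) I :=
  hfg.1.div hfg.2.1 fun y hy => (hfg.2.2.1 y hy).ne'

theorem deriv_div_ne_zero (hfg : ClassC n I f g) (hI : IsOpen I) (hn : 1 ≤ n) (hx : x ∈ I) :
    deriv (fun y => f y / g y) x ≠ 0 := by
  obtain ⟨hf, hg, hgpos, hW⟩ := hfg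
  have hn' : (n : WithTop ℕ∞) ≠ 0 := by exact_mod_cast Nat.one_le_iff_ne_zero.1 hn
  rw [deriv_fun_div ((hf.contDiffAt (hI.mem_nhds hx)).differentiableAt hn')
    ((hg.contDiffAt (hI.mem_nhds hx)).differentiableAt hn') (hgpos x hx).ne']
  exact div_ne_zero (by simpa [Wr] using hW x hx) (pow_ne_zero _ (hgpos x hx).ne')

theorem injOn_div_s10 (hfg : ClassC n I f g) (hI : IsOpen I) (hIc : I.OrdConnected) (hn : 1 ≤ n) :
    InjOn (fun y => f y / g y) I :=
  hIc.injOn_of_deriv_ne_zero fun _ hy => hfg.deriv_div_ne_zero hI hn hy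

section Inverse

variable (hfg : ClassC n I f g) (hI : IsOpen I) (hn : 1 ≤ n) (hx : x ∈ I)
include hfg hI hn hx

theorem eventually_invFunOn_div :
    ∀ᶠ y in 𝓝 (f x / g x), invFunOn (fun y => f y / g y) I y ∈ I ∧
      f (invFunOn (fun y => f y / g y) I y) / g (invFunOn (fun y => f y / g y) I y) = y := by
  have hst := (hfg.contDiffOn_div.contDiffAt (hI.mem_nhds hx)).hasStrictDerivAt
    (by exact_mod_cast (Nat.one_le_iff_ne_zero.1 hn))
  filter_upwards [hst.image_mem_nhds (hfg.deriv_div_ne_zero hI hn hx) (hI.mem_nhds hx)]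
    with y hy using ⟨invFunOn_mem hy, invFunOn_eq hy⟩

theorem contDiffAt_invFunOn_div_comp (hIc : I.OrdConnected) {q : ℝ → ℝ} {a : ℝ}
    (hq : ContDiffAt ℝ n q a) (hqa : q a = f x / g x) :
    ContDiffAt ℝ n (invFunOn (fun y => f y / g y) I ∘ q) a := by
  have hinv := (hfg.contDiffOn_div.contDiffAt (hI.mem_nhds hx)).contDiffAt_invFunOn_s10
    (by exact_mod_cast (Nat.one_le_iff_ne_zero.1 hn)) (hfg.deriv_div_ne_zero hI hn hx)
    (hfg.injOn_div_s10 hI hIc hn) (hI.mem_nhds hx)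
  rw [← hqa] at hinv
  exact hinv.comp a hq

theorem eventuallyEq_mul_comp_invFunOn_div {F G : ℝ → ℝ} {a : ℝ} (hF : ContinuousAt F a)
    (hG : ContinuousAt G a) (hFa : F a = f x) (hGa : G a = g x) {m : ℝ → ℝ}
    (hm : m = invFunOn (fun y => f y / g y) I ∘ fun u => F u / G u) :
    (fun u => F u * g (m u) - G u * f (m u)) =ᶠ[𝓝 a] 0 := by
  have hGa' : G a ≠ 0 := hGa ▸ (hfg.2.2.1 x hx).ne'
  have hq : Tendsto (fun u => F u / G u) (𝓝 a) (𝓝 (f x / g x)) := by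
    rw [← hFa, ← hGa]
    exact hF.tendsto.div hG.tendsto hGa'
  filter_upwards [hq.eventually (hfg.eventually_invFunOn_div hI hn hx), hG.eventually_ne hGa']
    with u ⟨hmem, hdiv⟩ hGu
  rw [div_eq_div_iff (hfg.2.2.1 _ hmem).ne' hGu] at hdiv
  simp only [hm, comp_apply, Pi.zero_apply]
  linear_combination -hdiv

end Inverse

end ClassC

noncomputable def momentIntegral (μ : Measure ℝ) (c x : ℝ) (j : ℕ) (φ : ℝ → ℝ) (u : ℝ) : ℝ :=
  ∫ t in Icc (0 : ℝ) 1, (t - c) ^ j * φ (x + (t - c) * u) ∂μ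

theorem momentIntegral_apply_zero (μ : Measure ℝ) (c x : ℝ) (j : ℕ) (φ : ℝ → ℝ) :
    momentIntegral μ c x j φ 0 = (∫ t in Icc (0 : ℝ) 1, (t - c) ^ j ∂μ) * φ x := by
  simp only [momentIntegral, mul_zero, add_zero, integral_mul_const]

section MomentIntegral

variable {μ : Measure ℝ} [IsFiniteMeasure μ] {I : Set ℝ} {c x δ : ℝ}

theorem add_sub_mul_mem_closedBall {t u : ℝ} (hc : c ∈ Icc (0 : ℝ) 1) (ht : t ∈ Icc (0 : ℝ) 1)
    (hu : u ∈ closedBall (0 : ℝ) δ) : x + (t - c) * u ∈ closedBall x δ := by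
  rw [mem_closedBall_zero_iff, Real.norm_eq_abs] at hu
  rw [mem_closedBall, Real.dist_eq, add_sub_cancel_left, abs_mul]
  exact (mul_le_of_le_one_left (abs_nonneg u)
    (abs_sub_le_of_nonneg_of_le ht.1 ht.2 hc.1 hc.2)).trans hu

variable (hc : c ∈ Icc (0 : ℝ) 1) (hI : closedBall x δ ⊆ I)
include hc hI

theorem continuousOn_momentIntegrand {ψ : ℝ → ℝ} (hψ : ContinuousOn ψ I) (j : ℕ) {u : ℝ}
    (hu : u ∈ closedBall (0 : ℝ) δ) :
    ContinuousOn (fun t => (t - c) ^ j * ψ (x + (t - c) * u)) (Icc 0 1) :=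
  (continuousOn_id.sub continuousOn_const).pow j |>.mul <|
    hψ.comp (by fun_prop) fun _ ht => hI (add_sub_mul_mem_closedBall hc ht hu)

theorem exists_bound_momentIntegrand {ψ : ℝ → ℝ} (hψ : ContinuousOn ψ I) (j : ℕ) :
    ∃ B, ∀ u ∈ closedBall (0 : ℝ) δ, ∀ t ∈ Icc (0 : ℝ) 1,
      ‖(t - c) ^ j * ψ (x + (t - c) * u)‖ ≤ B := by
  obtain ⟨B, hB⟩ := (isCompact_closedBall x δ).exists_bound_of_continuousOn (hψ.mono hI)
  refine ⟨B, fun u hu t ht => ?_⟩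
  rw [norm_mul, norm_pow]
  exact (mul_le_of_le_one_left (norm_nonneg _)
    (pow_le_one₀ (norm_nonneg _) (abs_sub_le_of_nonneg_of_le ht.1 ht.2 hc.1 hc.2))).trans
    (hB _ (add_sub_mul_mem_closedBall hc ht hu))

theorem hasDerivAt_momentIntegral (hIo : IsOpen I) {φ : ℝ → ℝ} (hφ : ContDiffOn ℝ 1 φ I) (j : ℕ)
    {u : ℝ} (hu : u ∈ ball (0 : ℝ) δ) :
    HasDerivAt (momentIntegral μ c x j φ) (momentIntegral μ c x (j + 1) (deriv φ) u) u := by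
  have hφ' : ContinuousOn (deriv φ) I := hφ.continuousOn_deriv_of_isOpen hIo le_rfl
  obtain ⟨B, hB⟩ := exists_bound_momentIntegrand hc hI hφ' (j + 1)
  obtain ⟨B₀, hB₀⟩ := exists_bound_momentIntegrand hc hI hφ.continuousOn j
  have hu' : u ∈ closedBall (0 : ℝ) δ := ball_subset_closedBall hu
  have hmeas : ∀ v ∈ ball (0 : ℝ) δ, AEStronglyMeasurable
      (fun t => (t - c) ^ j * φ (x + (t - c) * v)) (μ.restrict (Icc 0 1)) := fun v hv =>
    (continuousOn_momentIntegrand hc hI hφ.continuousOn j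
      (ball_subset_closedBall hv)).aestronglyMeasurable measurableSet_Icc
  refine (hasDerivAt_integral_of_dominated_loc_of_deriv_le (bound := fun _ => B)
    (F' := fun v t => (t - c) ^ (j + 1) * deriv φ (x + (t - c) * v))
    (isOpen_ball.mem_nhds hu) (eventually_of_mem (isOpen_ball.mem_nhds hu) hmeas)
    ?_ ?_ ?_ (integrable_const B) ?_).2
  · refine Integrable.of_bound (hmeas u hu) B₀ ?_
    filter_upwards [ae_restrict_mem measurableSet_Icc] with t ht using hB₀ u hu' t ht
  · exact (continuousOn_momentIntegrand hc hI hφ' (j + 1) hu').aestronglyMeasurable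
      measurableSet_Icc
  · filter_upwards [ae_restrict_mem measurableSet_Icc] with t ht v hv
      using hB v (ball_subset_closedBall hv) t ht
  · filter_upwards [ae_restrict_mem measurableSet_Icc] with t ht v hv
    have hz : x + (t - c) * v ∈ I :=
      hI (add_sub_mul_mem_closedBall hc ht (ball_subset_closedBall hv))
    have hφz := ((hφ.contDiffAt (hIo.mem_nhds hz)).differentiableAt one_ne_zero).hasDerivAt
    have hlin : HasDerivAt (fun w => x + (t - c) * w) (t - c) v := by
      simpa using ((hasDerivAt_id v).const_mul (t - c)).const_add x
    exact ((hφz.comp v hlin).const_mul ((t - c) ^ j)).congr_deriv (by ring)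

theorem contDiffOn_momentIntegral (hIo : IsOpen I) (k : ℕ) {φ : ℝ → ℝ}
    (hφ : ContDiffOn ℝ k φ I) (j : ℕ) :
    ContDiffOn ℝ k (momentIntegral μ c x j φ) (ball 0 δ) := by
  induction k generalizing j φ with
  | zero =>
    obtain ⟨B, hB⟩ := exists_bound_momentIntegrand hc hI hφ.continuousOn j
    rw [Nat.cast_zero, contDiffOn_zero]
    refine continuousOn_of_dominated (bound := fun _ => B) (fun u hu => ?_) (fun u hu => ?_)
      (integrable_const B) ?_
    · exact (continuousOn_momentIntegrand hc hI hφ.continuousOn j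
        (ball_subset_closedBall hu)).aestronglyMeasurable measurableSet_Icc
    · filter_upwards [ae_restrict_mem measurableSet_Icc] with t ht
        using hB u (ball_subset_closedBall hu) t ht
    · filter_upwards [ae_restrict_mem measurableSet_Icc] with t ht
      exact continuousOn_const.mul (hφ.continuousOn.comp (by fun_prop)
        fun u hu => hI (add_sub_mul_mem_closedBall hc ht (ball_subset_closedBall hu)))
  | succ k ih =>
    have hφ1 : ContDiffOn ℝ 1 φ I := hφ.of_le (by exact_mod_cast Nat.le_add_left 1 k)
    have hderiv := fun u (hu : u ∈ ball (0 : ℝ) δ) =>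
      hasDerivAt_momentIntegral (μ := μ) hc hI hIo hφ1 j hu
    rw [Nat.cast_succ, contDiffOn_succ_iff_deriv_of_isOpen isOpen_ball]
    refine ⟨fun u hu => (hderiv u hu).differentiableAt.differentiableWithinAt, by simp, ?_⟩
    exact (ih (hφ.deriv_of_isOpen hIo (by norm_cast)) (j + 1)).congr fun u hu => (hderiv u hu).deriv

theorem iteratedDeriv_momentIntegral (hIo : IsOpen I) (k : ℕ) {φ : ℝ → ℝ}
    (hφ : ContDiffOn ℝ k φ I) (j : ℕ) {u : ℝ} (hu : u ∈ ball (0 : ℝ) δ) :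
    iteratedDeriv k (momentIntegral μ c x j φ) u =
      momentIntegral μ c x (j + k) (iteratedDeriv k φ) u := by
  induction k generalizing j φ u with
  | zero => simp
  | succ k ih =>
    have hφ1 : ContDiffOn ℝ 1 φ I := hφ.of_le (by exact_mod_cast Nat.le_add_left 1 k)
    have hev : deriv (momentIntegral μ c x j φ) =ᶠ[𝓝 u] momentIntegral μ c x (j + 1) (deriv φ) :=
      eventually_of_mem (isOpen_ball.mem_nhds hu) fun v hv =>
        (hasDerivAt_momentIntegral hc hI hIo hφ1 j hv).deriv
    rw [iteratedDeriv_succ', hev.iteratedDeriv_eq, ih (hφ.deriv_of_isOpen hIo (by norm_cast)) _ hu,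
      ← iteratedDeriv_succ', add_assoc, add_comm 1 k]

end MomentIntegral

theorem mom1_mem_Icc (μ : Measure ℝ) [IsProbabilityMeasure μ] : mom1 μ ∈ Icc (0 : ℝ) 1 := by
  have hae : ∀ᵐ t ∂μ.restrict (Icc (0 : ℝ) 1), t ∈ Icc (0 : ℝ) 1 :=
    ae_restrict_mem measurableSet_Icc
  refine ⟨integral_nonneg_of_ae (hae.mono fun t ht => ht.1), ?_⟩
  calc mom1 μ ≤ ∫ _ in Icc (0 : ℝ) 1, (1 : ℝ) ∂μ :=
        integral_mono_of_nonneg (hae.mono fun t ht => ht.1) (integrable_const 1)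
          (hae.mono fun t ht => ht.2)
    _ ≤ 1 := by simp

theorem cmom_zero (μ : Measure ℝ) [IsProbabilityMeasure μ] (hsupp : μ (Icc (0 : ℝ) 1)ᶜ = 0) :
    cmom μ 0 = 1 := by
  simp [cmom, measureReal_def, (prob_compl_eq_zero_iff measurableSet_Icc).1 hsupp]

theorem iteratedDeriv_momentIntegral_mom1 {μ : Measure ℝ} [IsProbabilityMeasure μ] {I : Set ℝ}
    {x δ : ℝ} (hδ : 0 < δ) (hI : closedBall x δ ⊆ I) (hIo : IsOpen I) {k : ℕ} {φ : ℝ → ℝ}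
    (hφ : ContDiffOn ℝ k φ I) :
    iteratedDeriv k (momentIntegral μ (mom1 μ) x 0 φ) 0 = cmom μ k * iteratedDeriv k φ x := by
  rw [iteratedDeriv_momentIntegral (mom1_mem_Icc μ) hI hIo k hφ 0 (mem_ball_self hδ), zero_add,
    momentIntegral_apply_zero, cmom]

theorem mfun_eq_invFunOn_comp (I : Set ℝ) (f g : ℝ → ℝ) (μ : Measure ℝ) (x : ℝ) :
    mfun I f g μ x = invFunOn (fun y => f y / g y) I ∘
      fun u => momentIntegral μ (mom1 μ) x 0 f u / momentIntegral μ (mom1 μ) x 0 g u := by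
  have hline : ∀ t u : ℝ,
      t * (x + (1 - mom1 μ) * u) + (1 - t) * (x - mom1 μ * u) = x + (t - mom1 μ) * u :=
    fun t u => by ring
  funext u
  simp only [mfun, Mmean, momentIntegral, hline, pow_zero, one_mul, comp_apply]

theorem statement10_general (I : Set ℝ) (hIopen : IsOpen I)
    (hIconn : I.OrdConnected)
    (n : ℕ) (hn : 1 ≤ n) (f g : ℝ → ℝ) (hfg : ClassC n I f g)
    (μ : Measure ℝ) [IsProbabilityMeasure μ] (hsupp : μ (Set.Icc (0:ℝ) 1)ᶜ = 0) :
    ∀ x ∈ I,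
      ContDiffAt ℝ n (mfun I f g μ x) 0 ∧
      mfun I f g μ x 0 = x ∧
      ∑ i ∈ Finset.range (n + 1),
        (n.choose i : ℝ) * cmom μ i *
          (iteratedDeriv i f x * iteratedDeriv (n - i) (g ∘ mfun I f g μ x) 0 -
            iteratedDeriv i g x * iteratedDeriv (n - i) (f ∘ mfun I f g μ x) 0) = 0 := by
  intro x hx
  obtain ⟨δ, hδ, hball⟩ := nhds_basis_closedBall.mem_iff.1 (hIopen.mem_nhds hx)
  have hm := mfun_eq_invFunOn_comp I f g μ x
  set F := momentIntegral μ (mom1 μ) x 0 f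
  set G := momentIntegral μ (mom1 μ) x 0 g
  have hF : ContDiffAt ℝ n F 0 := (contDiffOn_momentIntegral (mom1_mem_Icc μ) hball hIopen n
    hfg.1 0).contDiffAt (ball_mem_nhds 0 hδ)
  have hG : ContDiffAt ℝ n G 0 := (contDiffOn_momentIntegral (mom1_mem_Icc μ) hball hIopen n
    hfg.2.1 0).contDiffAt (ball_mem_nhds 0 hδ)
  have hFk : ∀ k ≤ n, iteratedDeriv k F 0 = cmom μ k * iteratedDeriv k f x := fun k hk =>
    iteratedDeriv_momentIntegral_mom1 hδ hball hIopen (hfg.1.of_le (by exact_mod_cast hk))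
  have hGk : ∀ k ≤ n, iteratedDeriv k G 0 = cmom μ k * iteratedDeriv k g x := fun k hk =>
    iteratedDeriv_momentIntegral_mom1 hδ hball hIopen (hfg.2.1.of_le (by exact_mod_cast hk))
  have hF0 : F 0 = f x := by simpa [cmom_zero μ hsupp] using hFk 0 n.zero_le
  have hG0 : G 0 = g x := by simpa [cmom_zero μ hsupp] using hGk 0 n.zero_le
  have hmC : ContDiffAt ℝ n (mfun I f g μ x) 0 := hm ▸ hfg.contDiffAt_invFunOn_div_comp hIopen hn
    hx hIconn (hF.div hG (hG0 ▸ (hfg.2.2.1 x hx).ne')) (by rw [hF0, hG0])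
  have hm0 : mfun I f g μ x 0 = x := by
    rw [hm, comp_apply, hF0, hG0]
    exact (hfg.injOn_div_s10 hIopen hIconn hn).leftInvOn_invFunOn hx
  refine ⟨hmC, hm0, ?_⟩
  have hfm : ContDiffAt ℝ n (f ∘ mfun I f g μ x) 0 :=
    (hm0 ▸ hfg.1.contDiffAt (hIopen.mem_nhds hx)).comp 0 hmC
  have hgm : ContDiffAt ℝ n (g ∘ mfun I f g μ x) 0 :=
    (hm0 ▸ hfg.2.1.contDiffAt (hIopen.mem_nhds hx)).comp 0 hmC
  refine (Finset.sum_congr rfl fun i hi => ?_).trans (sum_choose_mul_iteratedDeriv_sub_eq_zero hF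
    hG hgm hfm (hfg.eventuallyEq_mul_comp_invFunOn_div hIopen hn hx hF.continuousAt
    hG.continuousAt hF0 hG0 hm))
  have hi : i ≤ n := Nat.lt_succ_iff.1 (Finset.mem_range.1 hi)
  rw [hFk i hi, hGk i hi]
  ring

/-- Differentiability of `m_x` and the fundamental derivative identity. -/
theorem statement10 (I : Set ℝ) (hIopen : IsOpen I) (hIne : I.Nonempty)
    (hIconn : I.OrdConnected)
    (n : ℕ) (hn : 1 ≤ n) (f g : ℝ → ℝ) (hfg : ClassC n I f g)
    (μ : Measure ℝ) [IsProbabilityMeasure μ] (hsupp : μ (Set.Icc (0:ℝ) 1)ᶜ = 0) :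
    ∀ x ∈ I,
      ContDiffAt ℝ n (mfun I f g μ x) 0 ∧
      mfun I f g μ x 0 = x ∧
      ∑ i ∈ Finset.range (n + 1),
        (n.choose i : ℝ) * cmom μ i *
          (iteratedDeriv i f x * iteratedDeriv (n - i) (g ∘ mfun I f g μ x) 0 -
            iteratedDeriv i g x * iteratedDeriv (n - i) (f ∘ mfun I f g μ x) 0) = 0 :=
  statement10_general I hIopen hIconn n hn f g hfg μ hsupp
end
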